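/- For any matrix X and invertible density operator ρ, ‖X‖₁² ≤ tr(X* ρ^{-1/2} X ρ^{-1/2}) = γ_ρ^s(X). That is, the trace norm squared is dominated by the symmetric inverse (1/2-power) metric. -/

import Mathlib

open scoped Matrix ComplexOrder

/-!
Let `X = W |X|` be the polar decomposition, so `‖X‖₁ = tr (Wᴴ X)` with `W` a contraction.
Cauchy–Schwarz for the positive form `(Y, Z) ↦ tr (Yᴴ ρs⁻¹ Z ρs⁻¹)`, applied to `Y = ρs W ρs`
and `Z = X`, gives `‖X‖₁² ≤ tr (Wᴴ ρs W ρs) · tr (Xᴴ ρs⁻¹ X ρs⁻¹)`. Cauchy–Schwarz for the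
Hilbert–Schmidt product of `ρs W` and `W ρs` bounds the first factor by
`√(tr (ρ W Wᴴ) · tr (ρ Wᴴ W)) ≤ tr ρ = 1`.
-/

/-- The trace (Schatten-1) norm `‖X‖₁ = tr √(XᴴX)`. -/
noncomputable def traceNorm {d : ℕ} (X : Matrix (Fin d) (Fin d) ℂ) : ℝ :=
  let hH := (Matrix.posSemidef_conjTranspose_mul_self X).1
  (hH.eigenvectorUnitary.1 * Matrix.diagonal (fun i => ((Real.sqrt (hH.eigenvalues i) : ℝ) : ℂ)) *
    (star hH.eigenvectorUnitary : Matrix (Fin d) (Fin d) ℂ)).trace.re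

namespace Matrix

open scoped MatrixOrder

section RCLike

variable {n 𝕜 : Type*} [Fintype n] [RCLike 𝕜]

lemma trace_mul_nonneg {A B : Matrix n n 𝕜} (hA : A.PosSemidef) (hB : B.PosSemidef) :
    0 ≤ (A * B).trace := by
  classical
  obtain ⟨C, rfl⟩ := CStarAlgebra.nonneg_iff_eq_star_mul_self.mp hB.nonneg
  rw [star_eq_conjTranspose, ← mul_assoc, trace_mul_comm]
  simpa only [mul_assoc] using (hA.mul_mul_conjTranspose_same C).trace_nonneg

lemma trace_mul_le_trace_of_le_one [DecidableEq n] {A P : Matrix n n 𝕜} (hA : A.PosSemidef)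
    (hP : P ≤ 1) : (A * P).trace ≤ A.trace := by
  have := trace_mul_nonneg hA (le_iff.mp hP)
  rwa [mul_sub, mul_one, trace_sub, sub_nonneg] at this

lemma norm_trace_mul_sq_le {P Q : Matrix n n 𝕜} (hP : P.PosSemidef) (hQ : Q.PosSemidef)
    (X Y : Matrix n n 𝕜) :
    ‖(Yᴴ * P * X * Q).trace‖ ^ 2 ≤
      RCLike.re (Yᴴ * P * Y * Q).trace * RCLike.re (Xᴴ * P * X * Q).trace := by
  classical
  -- Writing `P = Sᴴ S` turns the form into the `Q`-weighted inner product `⟪x, y⟫ = tr (y Q xᴴ)`.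
  obtain ⟨S, rfl⟩ := CStarAlgebra.nonneg_iff_eq_star_mul_self.mp hP.nonneg
  let := Q.toMatrixSeminormedAddCommGroup hQ
  let := Q.toMatrixInnerProductSpace hQ
  have trace_eq_inner (U V : Matrix n n 𝕜) :
      (Uᴴ * (star S * S) * V * Q).trace = inner 𝕜 (S * U) (S * V) := by
    change _ = (S * V * Q * (S * U)ᴴ).trace
    rw [conjTranspose_mul, star_eq_conjTranspose, trace_mul_comm _ (Uᴴ * Sᴴ)]
    simp only [mul_assoc]
  have := inner_mul_inner_self_le (𝕜 := 𝕜) (S * Y) (S * X)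
  rwa [norm_inner_symm (S * X), ← trace_eq_inner, ← trace_eq_inner, ← trace_eq_inner, ← sq] at this

lemma norm_trace_conjTranspose_mul_sq_le [DecidableEq n] {R : Matrix n n 𝕜} (hR : R.PosDef)
    (W X : Matrix n n 𝕜) :
    ‖(Wᴴ * X).trace‖ ^ 2 ≤
      RCLike.re (Wᴴ * R * W * R).trace * RCLike.re (Xᴴ * R⁻¹ * X * R⁻¹).trace := by
  have hdet : IsUnit R.det := (isUnit_iff_isUnit_det R).mp hR.isUnit
  have hRinv : R⁻¹.PosSemidef := hR.posSemidef.inv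
  have hCS := norm_trace_mul_sq_le hRinv hRinv X (R * W * R)
  simp only [conjTranspose_mul, hR.isHermitian.eq, mul_assoc,
    mul_nonsing_inv _ hdet, mul_one] at hCS
  rw [trace_mul_comm R, trace_mul_comm R] at hCS
  simpa only [mul_assoc, nonsing_inv_mul _ hdet, mul_one] using hCS

variable [DecidableEq n]

lemma continuousOn_spectrum (f : ℝ → ℝ) (A : Matrix n n 𝕜) : ContinuousOn f (spectrum ℝ A) :=
  A.finite_real_spectrum.continuousOn f

/-- The partial isometry `W` of the polar decomposition `X = W |X|`: as `(√0)⁻¹ = 0`, it vanishes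
on the kernel of `|X|`. -/
noncomputable def polarPart (X : Matrix n n 𝕜) : Matrix n n 𝕜 :=
  X * cfc (fun x : ℝ => (√x)⁻¹) (Xᴴ * X)

lemma conjTranspose_polarPart_mul_self (X : Matrix n n 𝕜) :
    (polarPart X)ᴴ * X = cfc Real.sqrt (Xᴴ * X) := by
  rw [polarPart, conjTranspose_mul, ← star_eq_conjTranspose, ← cfc_star, mul_assoc]
  conv_lhs => enter [2]; rw [← cfc_id' ℝ (Xᴴ * X) (.star_mul_self X)]
  rw [← cfc_mul _ _ _ (continuousOn_spectrum _ _) (continuousOn_spectrum _ _)]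
  congr 1
  funext x
  simp [← div_eq_inv_mul, Real.div_sqrt]

lemma conjTranspose_polarPart_mul_polarPart_le_one (X : Matrix n n 𝕜) :
    (polarPart X)ᴴ * polarPart X ≤ 1 := by
  rw [polarPart, conjTranspose_mul, ← star_eq_conjTranspose, ← cfc_star, mul_assoc,
    ← mul_assoc Xᴴ X]
  conv_lhs => enter [2, 1]; rw [← cfc_id' ℝ (Xᴴ * X) (.star_mul_self X)]
  rw [← cfc_mul _ _ _ (continuousOn_spectrum _ _) (continuousOn_spectrum _ _),
    ← cfc_mul _ _ _ (continuousOn_spectrum _ _) (continuousOn_spectrum _ _)]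
  refine cfc_le_one _ _ fun x _ => ?_
  simp only [star_trivial, ← div_eq_mul_inv, Real.div_sqrt]
  exact inv_mul_le_one_of_le₀ le_rfl (Real.sqrt_nonneg x)

end RCLike

section L2Operator

open scoped Matrix.Norms.L2Operator

variable {n : Type*} [Fintype n] [DecidableEq n]

lemma norm_polarPart_le_one (X : Matrix n n ℂ) : ‖polarPart X‖ ≤ 1 := by
  have h : ‖star (polarPart X) * polarPart X‖ ≤ 1 :=
    (CStarAlgebra.norm_le_one_iff_of_nonneg _ (star_mul_self_nonneg _)).mpr
      (conjTranspose_polarPart_mul_polarPart_le_one X)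
  rw [CStarRing.norm_star_mul_self, ← sq] at h
  exact (sq_le_one_iff₀ (norm_nonneg _)).mp h

lemma mul_conjTranspose_le_one {W : Matrix n n ℂ} (hW : ‖W‖ ≤ 1) : W * Wᴴ ≤ 1 := by
  refine (CStarAlgebra.norm_le_one_iff_of_nonneg _ (mul_star_self_nonneg W)).mp ?_
  rw [CStarRing.norm_self_mul_star]
  exact mul_le_one₀ hW (norm_nonneg W) hW

lemma conjTranspose_mul_le_one {W : Matrix n n ℂ} (hW : ‖W‖ ≤ 1) : Wᴴ * W ≤ 1 := by
  simpa using mul_conjTranspose_le_one (W := Wᴴ) (by rwa [← star_eq_conjTranspose, norm_star])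

lemma re_trace_conjTranspose_mul_mul_mul_le {R W : Matrix n n ℂ} (hR : R.PosSemidef)
    (hW : ‖W‖ ≤ 1) : (Wᴴ * R * W * R).trace.re ≤ (R * R).trace.re := by
  have hRR : (R * R).PosSemidef := by
    simpa [hR.isHermitian.eq] using posSemidef_conjTranspose_mul_self R
  have hCS := norm_trace_mul_sq_le PosSemidef.one PosSemidef.one (W * R) (R * W)
  simp only [conjTranspose_mul, hR.isHermitian.eq, mul_one, RCLike.re_to_complex] at hCS
  have e₁ : (Wᴴ * R * (R * W)).trace = (R * R * (W * Wᴴ)).trace := by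
    rw [mul_assoc, trace_mul_comm Wᴴ]
    simp only [mul_assoc]
  have e₂ : (R * Wᴴ * (W * R)).trace = (R * R * (Wᴴ * W)).trace := by
    rw [← mul_assoc, trace_mul_comm]
    simp only [mul_assoc]
  rw [e₁, e₂] at hCS
  have h₁ := Complex.re_le_re (trace_mul_le_trace_of_le_one hRR (mul_conjTranspose_le_one hW))
  have h₂ := Complex.re_le_re (trace_mul_le_trace_of_le_one hRR (conjTranspose_mul_le_one hW))
  have h₁' := Complex.re_le_re (trace_mul_nonneg hRR (posSemidef_self_mul_conjTranspose W))
  have h₂' := Complex.re_le_re (trace_mul_nonneg hRR (posSemidef_conjTranspose_mul_self W))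
  rw [Complex.zero_re] at h₁' h₂'
  have hre := Complex.re_le_norm (Wᴴ * R * (W * R)).trace
  rw [mul_assoc (Wᴴ * R)]
  nlinarith [norm_nonneg (Wᴴ * R * (W * R)).trace, mul_le_mul h₁ h₂ h₂' (h₁'.trans h₁)]

end L2Operator

end Matrix

open Matrix

lemma traceNorm_eq_re_trace_cfc_sqrt {d : ℕ} (X : Matrix (Fin d) (Fin d) ℂ) :
    traceNorm X = (cfc Real.sqrt (Xᴴ * X)).trace.re := by
  rw [(posSemidef_conjTranspose_mul_self X).1.cfc_eq]
  rfl

theorem stmt6_general {d : ℕ} (ρ ρs X : Matrix (Fin d) (Fin d) ℂ)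
    (htr : ρ.trace = 1)
    (hρs : ρs.PosDef) (hρs2 : ρs * ρs = ρ) :
    traceNorm X ^ 2 ≤ (Matrix.trace (Xᴴ * ρs⁻¹ * X * ρs⁻¹)).re := by
  set W := polarPart X
  have hW : (Wᴴ * ρs * W * ρs).trace.re ≤ 1 := by
    simpa [hρs2, htr] using
      re_trace_conjTranspose_mul_mul_mul_le hρs.posSemidef (norm_polarPart_le_one X)
  have hRHS : 0 ≤ (Xᴴ * ρs⁻¹ * X * ρs⁻¹).trace.re := by
    simpa using Complex.re_le_re (trace_mul_nonneg
      (hρs.posSemidef.inv.conjTranspose_mul_mul_same X) hρs.posSemidef.inv)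
  calc traceNorm X ^ 2 = (Wᴴ * X).trace.re ^ 2 := by
        rw [traceNorm_eq_re_trace_cfc_sqrt, conjTranspose_polarPart_mul_self]
    _ ≤ ‖(Wᴴ * X).trace‖ ^ 2 :=
        sq_le_sq.mpr ((Complex.abs_re_le_norm _).trans (le_abs_self _))
    _ ≤ (Wᴴ * ρs * W * ρs).trace.re * (Xᴴ * ρs⁻¹ * X * ρs⁻¹).trace.re :=
        norm_trace_conjTranspose_mul_sq_le hρs W X
    _ ≤ (Xᴴ * ρs⁻¹ * X * ρs⁻¹).trace.re := mul_le_of_le_one_left hRHS hW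

/-- for any matrix `X` and invertible density operator `ρ` with
square root `ρs` (so `ρs * ρs = ρ`), the squared trace norm is dominated by the
symmetric inverse (1/2-power) metric: `‖X‖₁² ≤ tr(Xᴴ ρ^{-1/2} X ρ^{-1/2})`. -/
theorem stmt6 {d : ℕ} (ρ ρs X : Matrix (Fin d) (Fin d) ℂ)
    (hρ : ρ.PosDef) (htr : ρ.trace = 1)
    (hρs : ρs.PosDef) (hρs2 : ρs * ρs = ρ) :
    traceNorm X ^ 2 ≤ (Matrix.trace (Xᴴ * ρs⁻¹ * X * ρs⁻¹)).re :=
  stmt6_general ρ ρs X htr hρs hρs2
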